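/- Let K be a field of characteristic different from 2 and let a, b, c, x be nonzero elements of K such that the 2-fold Pfister form ⟨⟨ac,x⟩⟩ is hyperbolic, i.e. equivalent to H². Then the quadratic form ⟨⟨a,c,x⟩⟩ ⊥ ⟨⟨a,b,−1⟩⟩ ⊥ H⁴ (of dimension 24) is equivalent to ⟨⟨a,bx,−1⟩⟩ ⊥ ⟨⟨a,b,x,−1⟩⟩ (of dimension 24). (This is the equidimensional form of the Witt-ring identity in display (3.6) of Proposition 3.3 of the paper.) -/

import Mathlib

open QuadraticMap

/-- The `m`-fold Pfister form `⟨⟨a₁,…,a_m⟩⟩`: the diagonal quadratic form of dimension `2^m`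
whose entries are the products `∏_{i ∈ S} (−a_i)` over all subsets `S` of `{1,…,m}`,
here modeled with subsets `S : Fin m → Bool`. -/
noncomputable def pfister (K : Type*) [Field K] {m : ℕ} (a : Fin m → K) :
    QuadraticForm K ((Fin m → Bool) → K) :=
  weightedSumSquares K (fun S : Fin m → Bool => ∏ i : Fin m, if S i then -a i else 1)

/-- `H^m`: the orthogonal sum of `m` copies of the hyperbolic plane `⟨1, −1⟩`. -/
noncomputable def hypPlanes (K : Type*) [Field K] (m : ℕ) :
    QuadraticForm K (Fin m × Fin 2 → K) :=
  weightedSumSquares K (fun p : Fin m × Fin 2 => if p.2 = 0 then (1 : K) else -1)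


section Aux

open QuadraticMap

variable {K : Type*} [Field K]

theorem wss_congr {ι ι' : Type*} [Fintype ι] [Fintype ι'] (e : ι ≃ ι')
    (w : ι → K) (w' : ι' → K) (u : ι → K) (hu : ∀ i, u i ≠ 0)
    (hw : ∀ i, w i = w' (e i) * u i ^ 2) :
    Equivalent (weightedSumSquares K w) (weightedSumSquares K w') := by
  refine ⟨{ toLinearEquiv := ?_, map_app' := ?_ }⟩
  · exact
      { toFun := fun g i' => u (e.symm i') * g (e.symm i')
        invFun := fun g i => (u i)⁻¹ * g (e i)
        map_add' := by intro f g; funext i'; simp [mul_add]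
        map_smul' := by intro r f; funext i'; simp [smul_eq_mul]; ring
        left_inv := by
          intro g; funext i
          simp only [Equiv.symm_apply_apply]
          rw [← mul_assoc, inv_mul_cancel₀ (hu i), one_mul]
        right_inv := by
          intro g; funext i'
          simp only [Equiv.apply_symm_apply]
          rw [← mul_assoc, mul_inv_cancel₀ (hu _), one_mul] }
  · intro g
    simp only [weightedSumSquares_apply, smul_eq_mul]
    rw [← Equiv.sum_comp e (fun i' => w' i' * (_ * _))]
    refine Finset.sum_congr rfl fun i _ => ?_
    simp only [Equiv.symm_apply_apply, hw i]
    ring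

theorem wss_sum {ι κ : Type*} [Fintype ι] [Fintype κ] (w₁ : ι → K) (w₂ : κ → K) :
    Equivalent (weightedSumSquares K (Sum.elim w₁ w₂))
      ((weightedSumSquares K w₁).prod (weightedSumSquares K w₂)) := by
  refine ⟨{ toLinearEquiv := ?_, map_app' := ?_ }⟩
  · exact
      { toFun := fun g => (fun i => g (Sum.inl i), fun j => g (Sum.inr j))
        invFun := fun p => Sum.elim p.1 p.2
        map_add' := by intro f g; rfl
        map_smul' := by intro r f; rfl
        left_inv := by intro g; funext i; cases i <;> rfl
        right_inv := by intro p; rfl }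
  · intro g
    simp [QuadraticMap.prod_apply, weightedSumSquares_apply, Fintype.sum_sum_type]

theorem equiv_smul {M₁ M₂ : Type*} [AddCommGroup M₁] [AddCommGroup M₂]
    [Module K M₁] [Module K M₂] {q₁ : QuadraticForm K M₁} {q₂ : QuadraticForm K M₂}
    (d : K) (h : Equivalent q₁ q₂) : Equivalent (d • q₁) (d • q₂) := by
  obtain ⟨f⟩ := h
  refine ⟨{ toLinearEquiv := f.toLinearEquiv, map_app' := fun m => ?_ }⟩
  show (d • q₂) (f m) = (d • q₁) m
  rw [QuadraticMap.smul_apply, QuadraticMap.smul_apply, f.map_app]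

theorem smul_wss {ι : Type*} [Fintype ι] (d : K) (w : ι → K) :
    d • weightedSumSquares K w = weightedSumSquares K (fun i => d * w i) := by
  ext g
  simp [weightedSumSquares_apply, Finset.mul_sum, mul_assoc]

theorem wss_pairs {ι : Type*} [Fintype ι] [DecidableEq ι] (h2 : (2:K) ≠ 0)
    (v : ι → K) (hv : ∀ i, v i ≠ 0) :
    Equivalent (weightedSumSquares K (fun p : ι × Fin 2 => if p.2 = 0 then v p.1 else -v p.1))
      (weightedSumSquares K (fun p : ι × Fin 2 => if p.2 = 0 then (1:K) else -1)) := by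
  refine ⟨{ toLinearEquiv := ?_, map_app' := ?_ }⟩
  · exact
      { toFun := fun g p =>
          if p.2 = 0 then (v p.1 + 1)/2 * g (p.1, 0) + (v p.1 - 1)/2 * g (p.1, 1)
          else (v p.1 - 1)/2 * g (p.1, 0) + (v p.1 + 1)/2 * g (p.1, 1)
        invFun := fun g p =>
          if p.2 = 0 then ((v p.1 + 1)/2 * g (p.1, 0) - (v p.1 - 1)/2 * g (p.1, 1)) / v p.1
          else (-((v p.1 - 1)/2) * g (p.1, 0) + (v p.1 + 1)/2 * g (p.1, 1)) / v p.1
        map_add' := by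
          intro f g; funext p; by_cases hp : p.2 = 0 <;> simp [hp] <;> ring
        map_smul' := by
          intro r f; funext p; by_cases hp : p.2 = 0 <;> simp [hp, smul_eq_mul] <;> ring
        left_inv := by
          intro g; funext p
          obtain ⟨i, j⟩ := p
          have hvi : v i ≠ 0 := hv i
          fin_cases j <;>
            (simp only [Fin.isValue, if_true, if_false, Fin.mk_one, Fin.mk_zero,
              show ((⟨0,by norm_num⟩ : Fin 2) = 0) from rfl,
              show ((⟨1,by norm_num⟩ : Fin 2) = (1:Fin 2)) from rfl,
              show ((1:Fin 2) = 0) = False from by simp, if_neg (one_ne_zero (α := Fin 2))] <;>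
            field_simp <;> ring)
        right_inv := by
          intro g; funext p
          obtain ⟨i, j⟩ := p
          have hvi : v i ≠ 0 := hv i
          fin_cases j <;>
            (simp only [Fin.isValue, Fin.mk_one, Fin.mk_zero, if_true, if_neg
              (one_ne_zero (α := Fin 2)), if_pos rfl] <;>
            field_simp <;> ring) }
  · intro g
    simp only [weightedSumSquares_apply, smul_eq_mul, Fintype.sum_prod_type, Fin.sum_univ_two]
    refine Finset.sum_congr rfl fun i _ => ?_
    have hvi : v i ≠ 0 := hv i
    simp only [LinearEquiv.coe_mk, if_pos rfl, if_neg (one_ne_zero (α := Fin 2))]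
    field_simp
    simp only [if_pos trivial]
    field_simp
    ring

def pfw {m : ℕ} (α : Fin m → K) : (Fin m → Bool) → K :=
  fun S => ∏ i : Fin m, if S i then -α i else 1

theorem forall_bool2 {P : (Fin 2 → Bool) → Prop} (h : ∀ b0 b1, P ![b0,b1]) : ∀ S, P S := by
  intro S
  have : S = ![S 0, S 1] := by funext i; fin_cases i <;> rfl
  rw [this]; exact h _ _

theorem forall_bool3 {P : (Fin 3 → Bool) → Prop} (h : ∀ b0 b1 b2, P ![b0,b1,b2]) : ∀ S, P S := by
  intro S
  have : S = ![S 0, S 1, S 2] := by funext i; fin_cases i <;> rfl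
  rw [this]; exact h _ _ _

theorem forall_bool4 {P : (Fin 4 → Bool) → Prop} (h : ∀ b0 b1 b2 b3, P ![b0,b1,b2,b3]) :
    ∀ S, P S := by
  intro S
  have : S = ![S 0, S 1, S 2, S 3] := by funext i; fin_cases i <;> rfl
  rw [this]; exact h _ _ _ _

def eBF (m : ℕ) : (Fin m → Bool) ≃ Fin (2^m) :=
  (Equiv.arrowCongr (Equiv.refl _) finTwoEquiv.symm).trans finFunctionFinEquiv

abbrev B2 := Fin 2 → Bool
abbrev B3 := Fin 3 → Bool
abbrev B4 := Fin 4 → Bool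
abbrev IL := B3 ⊕ (B3 ⊕ (B2 ⊕ B2))
abbrev IR := B3 ⊕ B4
abbrev JM := (B2 ⊕ B2) ⊕ ((B2 ⊕ B2) ⊕ (Fin 4 × Fin 2))

def jAX0 (S : B2) : JM := Sum.inl (Sum.inl S)
def jAX1 (S : B2) : JM := Sum.inl (Sum.inr S)
def jAB0 (S : B2) : JM := Sum.inr (Sum.inl (Sum.inl S))
def jAB1 (S : B2) : JM := Sum.inr (Sum.inl (Sum.inr S))
def jP (i : Fin 4) (j : Fin 2) : JM := Sum.inr (Sum.inr (i, j))

def tblP : Fin 8 → JM := ![jAX0 ![false,false], jAX0 ![true,false], jP 0 1, jP 1 0, jAX0 ![false,true], jAX0 ![true,true], jP 2 0, jP 3 1]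
def tblQ : Fin 8 → JM := ![jAB0 ![false,false], jAB0 ![true,false], jAB0 ![false,true], jAB0 ![true,true], jAB1 ![false,false], jAB1 ![true,false], jAB1 ![false,true], jAB1 ![true,true]]
def tbl4 : Fin 4 → JM := ![jAX1 ![false,false], jP 1 1, jAX1 ![false,true], jP 3 0]
def tbl5 : Fin 4 → JM := ![jAX1 ![true,false], jP 0 0, jAX1 ![true,true], jP 2 1]
def tblR3 : Fin 8 → JM := ![jAX0 ![false,false], jAX0 ![true,false], jP 0 1, jP 1 0, jAX1 ![false,false], jAX1 ![true,false], jP 2 1, jP 3 0]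
def tblR4 : Fin 16 → JM := ![jAB0 ![false,false], jAB0 ![true,false], jAB0 ![false,true], jAB0 ![true,true], jAX0 ![false,true], jAX0 ![true,true], jP 0 0, jP 1 1, jAB1 ![false,false], jAB1 ![true,false], jAB1 ![false,true], jAB1 ![true,true], jAX1 ![false,true], jAX1 ![true,true], jP 2 0, jP 3 1]


def eLf : IL → JM :=
  Sum.elim (tblP ∘ eBF 3) (Sum.elim (tblQ ∘ eBF 3) (Sum.elim (tbl4 ∘ eBF 2) (tbl5 ∘ eBF 2)))
def eRf : IR → JM := Sum.elim (tblR3 ∘ eBF 3) (tblR4 ∘ eBF 4)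

set_option synthInstance.maxHeartbeats 1000000 in
set_option maxHeartbeats 2000000 in
theorem eLf_bij : Function.Bijective eLf := by
  letI := Fintype.decidableInjectiveFintype eLf
  exact (Fintype.bijective_iff_injective_and_card eLf).2 ⟨by decide, by rfl⟩

noncomputable def eL : IL ≃ JM := Equiv.ofBijective eLf eLf_bij

set_option synthInstance.maxHeartbeats 1000000 in
set_option maxHeartbeats 2000000 in
theorem eRf_bij : Function.Bijective eRf := by
  letI := Fintype.decidableInjectiveFintype eRf
  exact (Fintype.bijective_iff_injective_and_card eRf).2 ⟨by decide, by rfl⟩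

noncomputable def eR : IR ≃ JM := Equiv.ofBijective eRf eRf_bij

def eHf : Fin 4 × Fin 2 → ((Fin 2 × Fin 2) ⊕ (Fin 2 × Fin 2)) := fun p =>
  if p.1 = 0 then Sum.inl (0, p.2) else if p.1 = 1 then Sum.inl (1, p.2)
  else if p.1 = 2 then Sum.inr (0, p.2) else Sum.inr (1, p.2)

theorem eHf_bij : Function.Bijective eHf := by
  letI := Fintype.decidableInjectiveFintype eHf
  exact (Fintype.bijective_iff_injective_and_card eHf).2 ⟨by decide, by rfl⟩

noncomputable def eH : (Fin 4 × Fin 2) ≃ ((Fin 2 × Fin 2) ⊕ (Fin 2 × Fin 2)) :=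
  Equiv.ofBijective eHf eHf_bij

lemma eL_P_fff : eL (Sum.inl ![false,false,false]) = jAX0 ![false,false] := rfl
lemma eL_P_tff : eL (Sum.inl ![true,false,false]) = jAX0 ![true,false] := rfl
lemma eL_P_ftf : eL (Sum.inl ![false,true,false]) = jP 0 1 := rfl
lemma eL_P_ttf : eL (Sum.inl ![true,true,false]) = jP 1 0 := rfl
lemma eL_P_fft : eL (Sum.inl ![false,false,true]) = jAX0 ![false,true] := rfl
lemma eL_P_tft : eL (Sum.inl ![true,false,true]) = jAX0 ![true,true] := rfl
lemma eL_P_ftt : eL (Sum.inl ![false,true,true]) = jP 2 0 := rfl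
lemma eL_P_ttt : eL (Sum.inl ![true,true,true]) = jP 3 1 := rfl
lemma eL_Q_fff : eL (Sum.inr (Sum.inl ![false,false,false])) = jAB0 ![false,false] := rfl
lemma eL_Q_fft : eL (Sum.inr (Sum.inl ![false,false,true])) = jAB1 ![false,false] := rfl
lemma eL_Q_ftf : eL (Sum.inr (Sum.inl ![false,true,false])) = jAB0 ![false,true] := rfl
lemma eL_Q_ftt : eL (Sum.inr (Sum.inl ![false,true,true])) = jAB1 ![false,true] := rfl
lemma eL_Q_tff : eL (Sum.inr (Sum.inl ![true,false,false])) = jAB0 ![true,false] := rfl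
lemma eL_Q_tft : eL (Sum.inr (Sum.inl ![true,false,true])) = jAB1 ![true,false] := rfl
lemma eL_Q_ttf : eL (Sum.inr (Sum.inl ![true,true,false])) = jAB0 ![true,true] := rfl
lemma eL_Q_ttt : eL (Sum.inr (Sum.inl ![true,true,true])) = jAB1 ![true,true] := rfl
lemma eL_4_ff : eL (Sum.inr (Sum.inr (Sum.inl ![false,false]))) = jAX1 ![false,false] := rfl
lemma eL_4_tf : eL (Sum.inr (Sum.inr (Sum.inl ![true,false]))) = jP 1 1 := rfl
lemma eL_4_ft : eL (Sum.inr (Sum.inr (Sum.inl ![false,true]))) = jAX1 ![false,true] := rfl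
lemma eL_4_tt : eL (Sum.inr (Sum.inr (Sum.inl ![true,true]))) = jP 3 0 := rfl
lemma eL_5_ff : eL (Sum.inr (Sum.inr (Sum.inr ![false,false]))) = jAX1 ![true,false] := rfl
lemma eL_5_tf : eL (Sum.inr (Sum.inr (Sum.inr ![true,false]))) = jP 0 0 := rfl
lemma eL_5_ft : eL (Sum.inr (Sum.inr (Sum.inr ![false,true]))) = jAX1 ![true,true] := rfl
lemma eL_5_tt : eL (Sum.inr (Sum.inr (Sum.inr ![true,true]))) = jP 2 1 := rfl
lemma eR_3_fff : eR (Sum.inl ![false,false,false]) = jAX0 ![false,false] := rfl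
lemma eR_3_tff : eR (Sum.inl ![true,false,false]) = jAX0 ![true,false] := rfl
lemma eR_3_ftf : eR (Sum.inl ![false,true,false]) = jP 0 1 := rfl
lemma eR_3_ttf : eR (Sum.inl ![true,true,false]) = jP 1 0 := rfl
lemma eR_3_fft : eR (Sum.inl ![false,false,true]) = jAX1 ![false,false] := rfl
lemma eR_3_tft : eR (Sum.inl ![true,false,true]) = jAX1 ![true,false] := rfl
lemma eR_3_ftt : eR (Sum.inl ![false,true,true]) = jP 2 1 := rfl
lemma eR_3_ttt : eR (Sum.inl ![true,true,true]) = jP 3 0 := rfl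
lemma eR_4_ffff : eR (Sum.inr ![false,false,false,false]) = jAB0 ![false,false] := rfl
lemma eR_4_tfff : eR (Sum.inr ![true,false,false,false]) = jAB0 ![true,false] := rfl
lemma eR_4_ftff : eR (Sum.inr ![false,true,false,false]) = jAB0 ![false,true] := rfl
lemma eR_4_ttff : eR (Sum.inr ![true,true,false,false]) = jAB0 ![true,true] := rfl
lemma eR_4_fftf : eR (Sum.inr ![false,false,true,false]) = jAX0 ![false,true] := rfl
lemma eR_4_tftf : eR (Sum.inr ![true,false,true,false]) = jAX0 ![true,true] := rfl
lemma eR_4_fttf : eR (Sum.inr ![false,true,true,false]) = jP 0 0 := rfl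
lemma eR_4_tttf : eR (Sum.inr ![true,true,true,false]) = jP 1 1 := rfl
lemma eR_4_ffft : eR (Sum.inr ![false,false,false,true]) = jAB1 ![false,false] := rfl
lemma eR_4_tfft : eR (Sum.inr ![true,false,false,true]) = jAB1 ![true,false] := rfl
lemma eR_4_ftft : eR (Sum.inr ![false,true,false,true]) = jAB1 ![false,true] := rfl
lemma eR_4_ttft : eR (Sum.inr ![true,true,false,true]) = jAB1 ![true,true] := rfl
lemma eR_4_fftt : eR (Sum.inr ![false,false,true,true]) = jAX1 ![false,true] := rfl
lemma eR_4_tftt : eR (Sum.inr ![true,false,true,true]) = jAX1 ![true,true] := rfl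
lemma eR_4_fttt : eR (Sum.inr ![false,true,true,true]) = jP 2 0 := rfl
lemma eR_4_tttt : eR (Sum.inr ![true,true,true,true]) = jP 3 1 := rfl


end Aux

/-- Display (3.6): if `⟨⟨ac,x⟩⟩` is hyperbolic then
`⟨⟨a,c,x⟩⟩ ⊥ ⟨⟨a,b,−1⟩⟩ ⊥ H⁴ ≃ ⟨⟨a,bx,−1⟩⟩ ⊥ ⟨⟨a,b,x,−1⟩⟩`. -/
theorem stmt_6 {K : Type*} [Field K] (hchar : ringChar K ≠ 2)
    (a b c x : K) (ha : a ≠ 0) (hb : b ≠ 0) (hc : c ≠ 0) (hx : x ≠ 0)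
    (h : QuadraticMap.Equivalent (pfister K ![a * c, x]) (hypPlanes K 2)) :
    QuadraticMap.Equivalent
      ((pfister K ![a, c, x]).prod ((pfister K ![a, b, -1]).prod (hypPlanes K 4)))
      ((pfister K ![a, b * x, -1]).prod (pfister K ![a, b, x, -1])) := by
  classical
  have h2 : (2:K) ≠ 0 := Ring.two_ne_zero hchar
  set w4 : B2 → K := pfw ![a*c, x] with hw4def
  set w5 : B2 → K := fun S => -a * pfw ![a*c, x] S with hw5def
  -- ⟨⟨ac,x⟩⟩ scaled by -a is still hyperbolic
  have e_w5 : Equivalent (hypPlanes K 2) (weightedSumSquares K w5) := by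
    have s1 : Equivalent ((-a) • pfister K ![a*c,x]) ((-a) • hypPlanes K 2) := equiv_smul _ h
    have s2 : ((-a) • hypPlanes K 2) =
        weightedSumSquares K (fun p : Fin 2 × Fin 2 => if p.2 = 0 then (-a) else -(-a)) := by
      rw [hypPlanes, smul_wss]; congr 1; funext p; split <;> ring
    have s4 : ((-a) • pfister K ![a*c,x]) = weightedSumSquares K w5 := by
      rw [hw5def, pfister, smul_wss]; rfl
    have s3 : Equivalent
        (weightedSumSquares K (fun p : Fin 2 × Fin 2 => if p.2 = 0 then (-a) else -(-a)))
        (hypPlanes K 2) := wss_pairs h2 (fun _ => -a) (fun _ => neg_ne_zero.2 ha)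
    have s1' : Equivalent
        (weightedSumSquares K (fun p : Fin 2 × Fin 2 => if p.2 = 0 then (-a) else -(-a)))
        (weightedSumSquares K w5) := by
      rw [← s2, ← s4]; exact s1.symm
    exact s3.symm.trans s1'
  have e_H4 : Equivalent (hypPlanes K 4)
      ((weightedSumSquares K w4).prod (weightedSumSquares K w5)) := by
    have t1 : Equivalent (hypPlanes K 4)
        (weightedSumSquares K (Sum.elim
          (fun p : Fin 2 × Fin 2 => if p.2 = 0 then (1:K) else -1)
          (fun p : Fin 2 × Fin 2 => if p.2 = 0 then (1:K) else -1))) := by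
      refine wss_congr eH _ _ (fun _ => 1) (fun _ => one_ne_zero) ?_
      rintro ⟨i, j⟩
      fin_cases i <;> fin_cases j <;>
        simp [hypPlanes, eH, Equiv.ofBijective, eHf]
    have t2 := wss_sum (K := K)
      (fun p : Fin 2 × Fin 2 => if p.2 = 0 then (1:K) else -1)
      (fun p : Fin 2 × Fin 2 => if p.2 = 0 then (1:K) else -1)
    have t3 : Equivalent (hypPlanes K 2) (weightedSumSquares K w4) := h.symm
    exact t1.trans (t2.trans (QuadraticMap.Equivalent.prod t3 e_w5))
  -- linearize the left-hand side
  have e_L : Equivalent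
      ((pfister K ![a, c, x]).prod ((pfister K ![a, b, -1]).prod (hypPlanes K 4)))
      (weightedSumSquares K
        (Sum.elim (pfw ![a,c,x]) (Sum.elim (pfw ![a,b,-1]) (Sum.elim w4 w5)))) := by
    have u1 : Equivalent
        ((pfister K ![a, c, x]).prod ((pfister K ![a, b, -1]).prod (hypPlanes K 4)))
        ((weightedSumSquares K (pfw ![a,c,x])).prod
          ((weightedSumSquares K (pfw ![a,b,-1])).prod
            ((weightedSumSquares K w4).prod (weightedSumSquares K w5)))) :=
      QuadraticMap.Equivalent.prod (QuadraticMap.Equivalent.refl _)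
        (QuadraticMap.Equivalent.prod (QuadraticMap.Equivalent.refl _) e_H4)
    have u2 : Equivalent
        (weightedSumSquares K
          (Sum.elim (pfw ![a,c,x]) (Sum.elim (pfw ![a,b,-1]) (Sum.elim w4 w5))))
        ((weightedSumSquares K (pfw ![a,c,x])).prod
          ((weightedSumSquares K (pfw ![a,b,-1])).prod
            ((weightedSumSquares K w4).prod (weightedSumSquares K w5)))) :=
      (wss_sum _ _).trans (QuadraticMap.Equivalent.prod (QuadraticMap.Equivalent.refl _)
        ((wss_sum _ _).trans (QuadraticMap.Equivalent.prod (QuadraticMap.Equivalent.refl _)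
          (wss_sum _ _))))
    exact u1.trans u2.symm
  have e_R : Equivalent
      ((pfister K ![a, b * x, -1]).prod (pfister K ![a, b, x, -1]))
      (weightedSumSquares K (Sum.elim (pfw ![a,b*x,-1]) (pfw ![a,b,x,-1]))) :=
    (wss_sum _ _).symm
  -- middle weights
  set vL : Fin 4 → K := ![c, a*c, c*x, a*c*x] with hvLdef
  set vR : Fin 4 → K := ![b*x, a*b*x, b*x, a*b*x] with hvRdef
  have hvL : ∀ i, vL i ≠ 0 := by intro i; fin_cases i <;> simp [hvLdef, ha, hc, hx]
  have hvR : ∀ i, vR i ≠ 0 := by intro i; fin_cases i <;> simp [hvRdef, ha, hb, hx]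
  have bigL : Equivalent
      (weightedSumSquares K
        (Sum.elim (pfw ![a,c,x]) (Sum.elim (pfw ![a,b,-1]) (Sum.elim w4 w5))))
      (weightedSumSquares K
        (Sum.elim (Sum.elim (pfw ![a,x]) (pfw ![a,x]))
          (Sum.elim (Sum.elim (pfw ![a,b]) (pfw ![a,b]))
            (fun p : Fin 4 × Fin 2 => if p.2 = 0 then vL p.1 else -vL p.1)))) := by
    refine wss_congr eL _ _
      (Sum.elim (fun _ => 1) (Sum.elim (fun _ => 1) (Sum.elim (fun _ => 1)
        (fun S : B2 => if S 0 then a else 1)))) ?_ ?_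
    · rintro (S | S | S | S) <;> simp only [Sum.elim_inl, Sum.elim_inr]
      · exact one_ne_zero
      · exact one_ne_zero
      · exact one_ne_zero
      · split <;> simp [ha]
    · rintro (S | S | S | S)
      · revert S; refine forall_bool3 ?_; intro b0 b1 b2
        cases b0 <;> cases b1 <;> cases b2 <;>
          (simp [hvLdef, hw4def, hw5def, eL_P_fff, eL_P_tff, eL_P_ftf, eL_P_ttf, eL_P_fft, eL_P_tft, eL_P_ftt, eL_P_ttt, eL_Q_fff, eL_Q_fft, eL_Q_ftf, eL_Q_ftt, eL_Q_tff, eL_Q_tft, eL_Q_ttf, eL_Q_ttt, eL_4_ff, eL_4_tf, eL_4_ft, eL_4_tt, eL_5_ff, eL_5_tf, eL_5_ft, eL_5_tt, Sum.elim_inl, Sum.elim_inr, jAX0, jAX1, jAB0, jAB1, jP, pfw, Fin.prod_univ_two, Fin.prod_univ_three, Fin.prod_univ_four, Matrix.cons_val_zero, Matrix.cons_val_one, Matrix.head_cons, Matrix.cons_val_two, Matrix.tail_cons, Matrix.cons_val_three]; try ring)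
      · revert S; refine forall_bool3 ?_; intro b0 b1 b2
        cases b0 <;> cases b1 <;> cases b2 <;>
          (simp [hvLdef, hw4def, hw5def, eL_P_fff, eL_P_tff, eL_P_ftf, eL_P_ttf, eL_P_fft, eL_P_tft, eL_P_ftt, eL_P_ttt, eL_Q_fff, eL_Q_fft, eL_Q_ftf, eL_Q_ftt, eL_Q_tff, eL_Q_tft, eL_Q_ttf, eL_Q_ttt, eL_4_ff, eL_4_tf, eL_4_ft, eL_4_tt, eL_5_ff, eL_5_tf, eL_5_ft, eL_5_tt, Sum.elim_inl, Sum.elim_inr, jAX0, jAX1, jAB0, jAB1, jP, pfw, Fin.prod_univ_two, Fin.prod_univ_three, Fin.prod_univ_four, Matrix.cons_val_zero, Matrix.cons_val_one, Matrix.head_cons, Matrix.cons_val_two, Matrix.tail_cons, Matrix.cons_val_three]; try ring)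
      · revert S; refine forall_bool2 ?_; intro b0 b1
        cases b0 <;> cases b1 <;>
          (simp [hvLdef, hw4def, hw5def, eL_P_fff, eL_P_tff, eL_P_ftf, eL_P_ttf, eL_P_fft, eL_P_tft, eL_P_ftt, eL_P_ttt, eL_Q_fff, eL_Q_fft, eL_Q_ftf, eL_Q_ftt, eL_Q_tff, eL_Q_tft, eL_Q_ttf, eL_Q_ttt, eL_4_ff, eL_4_tf, eL_4_ft, eL_4_tt, eL_5_ff, eL_5_tf, eL_5_ft, eL_5_tt, Sum.elim_inl, Sum.elim_inr, jAX0, jAX1, jAB0, jAB1, jP, pfw, Fin.prod_univ_two, Fin.prod_univ_three, Fin.prod_univ_four, Matrix.cons_val_zero, Matrix.cons_val_one, Matrix.head_cons, Matrix.cons_val_two, Matrix.tail_cons, Matrix.cons_val_three]; try ring)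
      · revert S; refine forall_bool2 ?_; intro b0 b1
        cases b0 <;> cases b1 <;>
          (simp [hvLdef, hw4def, hw5def, eL_P_fff, eL_P_tff, eL_P_ftf, eL_P_ttf, eL_P_fft, eL_P_tft, eL_P_ftt, eL_P_ttt, eL_Q_fff, eL_Q_fft, eL_Q_ftf, eL_Q_ftt, eL_Q_tff, eL_Q_tft, eL_Q_ttf, eL_Q_ttt, eL_4_ff, eL_4_tf, eL_4_ft, eL_4_tt, eL_5_ff, eL_5_tf, eL_5_ft, eL_5_tt, Sum.elim_inl, Sum.elim_inr, jAX0, jAX1, jAB0, jAB1, jP, pfw, Fin.prod_univ_two, Fin.prod_univ_three, Fin.prod_univ_four, Matrix.cons_val_zero, Matrix.cons_val_one, Matrix.head_cons, Matrix.cons_val_two, Matrix.tail_cons, Matrix.cons_val_three]; try ring)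
  have bigR : Equivalent
      (weightedSumSquares K (Sum.elim (pfw ![a,b*x,-1]) (pfw ![a,b,x,-1])))
      (weightedSumSquares K
        (Sum.elim (Sum.elim (pfw ![a,x]) (pfw ![a,x]))
          (Sum.elim (Sum.elim (pfw ![a,b]) (pfw ![a,b]))
            (fun p : Fin 4 × Fin 2 => if p.2 = 0 then vR p.1 else -vR p.1)))) := by
    refine wss_congr eR _ _ (fun _ => 1) (fun _ => one_ne_zero) ?_
    rintro (S | S)
    · revert S; refine forall_bool3 ?_; intro b0 b1 b2
      cases b0 <;> cases b1 <;> cases b2 <;>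
        (simp [hvRdef, eR_3_fff, eR_3_tff, eR_3_ftf, eR_3_ttf, eR_3_fft, eR_3_tft, eR_3_ftt, eR_3_ttt, eR_4_ffff, eR_4_tfff, eR_4_ftff, eR_4_ttff, eR_4_fftf, eR_4_tftf, eR_4_fttf, eR_4_tttf, eR_4_ffft, eR_4_tfft, eR_4_ftft, eR_4_ttft, eR_4_fftt, eR_4_tftt, eR_4_fttt, eR_4_tttt, Sum.elim_inl, Sum.elim_inr, jAX0, jAX1, jAB0, jAB1, jP, pfw, Fin.prod_univ_two, Fin.prod_univ_three, Fin.prod_univ_four, Matrix.cons_val_zero, Matrix.cons_val_one, Matrix.head_cons, Matrix.cons_val_two, Matrix.tail_cons, Matrix.cons_val_three]; try ring)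
    · revert S; refine forall_bool4 ?_; intro b0 b1 b2 b3
      cases b0 <;> cases b1 <;> cases b2 <;> cases b3 <;>
        (simp [hvRdef, eR_3_fff, eR_3_tff, eR_3_ftf, eR_3_ttf, eR_3_fft, eR_3_tft, eR_3_ftt, eR_3_ttt, eR_4_ffff, eR_4_tfff, eR_4_ftff, eR_4_ttff, eR_4_fftf, eR_4_tftf, eR_4_fttf, eR_4_tttf, eR_4_ffft, eR_4_tfft, eR_4_ftft, eR_4_ttft, eR_4_fftt, eR_4_tftt, eR_4_fttt, eR_4_tttt, Sum.elim_inl, Sum.elim_inr, jAX0, jAX1, jAB0, jAB1, jP, pfw, Fin.prod_univ_two, Fin.prod_univ_three, Fin.prod_univ_four, Matrix.cons_val_zero, Matrix.cons_val_one, Matrix.head_cons, Matrix.cons_val_two, Matrix.tail_cons, Matrix.cons_val_three]; try ring)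
  have mid : Equivalent
      (weightedSumSquares K
        (Sum.elim (Sum.elim (pfw ![a,x]) (pfw ![a,x]))
          (Sum.elim (Sum.elim (pfw ![a,b]) (pfw ![a,b]))
            (fun p : Fin 4 × Fin 2 => if p.2 = 0 then vL p.1 else -vL p.1))))
      (weightedSumSquares K
        (Sum.elim (Sum.elim (pfw ![a,x]) (pfw ![a,x]))
          (Sum.elim (Sum.elim (pfw ![a,b]) (pfw ![a,b]))
            (fun p : Fin 4 × Fin 2 => if p.2 = 0 then vR p.1 else -vR p.1)))) := by
    have pairstep : Equivalent
        (weightedSumSquares K (fun p : Fin 4 × Fin 2 => if p.2 = 0 then vL p.1 else -vL p.1))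
        (weightedSumSquares K (fun p : Fin 4 × Fin 2 => if p.2 = 0 then vR p.1 else -vR p.1)) :=
      (wss_pairs h2 vL hvL).trans (wss_pairs h2 vR hvR).symm
    have step2 : Equivalent
        (weightedSumSquares K (Sum.elim (Sum.elim (pfw ![a,b]) (pfw ![a,b]))
          (fun p : Fin 4 × Fin 2 => if p.2 = 0 then vL p.1 else -vL p.1)))
        (weightedSumSquares K (Sum.elim (Sum.elim (pfw ![a,b]) (pfw ![a,b]))
          (fun p : Fin 4 × Fin 2 => if p.2 = 0 then vR p.1 else -vR p.1))) :=
      (wss_sum _ _).trans ((QuadraticMap.Equivalent.prod (QuadraticMap.Equivalent.refl _)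
        pairstep).trans (wss_sum _ _).symm)
    exact (wss_sum _ _).trans ((QuadraticMap.Equivalent.prod (QuadraticMap.Equivalent.refl _)
      step2).trans (wss_sum _ _).symm)
  exact e_L.trans (bigL.trans (mid.trans (bigR.symm.trans e_R.symm)))
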